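/- arXiv:2310.01592 — 6 statements merged into one kernel-verified Lean document; each statement's English description precedes it below -/
import Mathlib

section
/- Let Φ be an irreducible root system in a finite-dimensional real inner product space V, and let V₁, V₂ be proper linear subspaces of V. Then Φ is not contained in V₁ ∪ V₂. In particular, an irreducible root system cannot be covered by two hyperplanes of its ambient space. -/
open scoped RealInnerProductSpace

/-- A (crystallographic, not necessarily reduced or irreducible) root system
in a real inner product space: a finite set of nonzero vectors spanning the
space, closed under the associated reflections, with integral Cartan numbers. -/
structure IsRootSystem {V : Type*} [NormedAddCommGroup V] [InnerProductSpace ℝ V]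
    (Φ : Set V) : Prop where
  finite : Φ.Finite
  ne_zero : ∀ α ∈ Φ, α ≠ 0
  span_eq_top : Submodule.span ℝ Φ = ⊤
  reflect_mem : ∀ α ∈ Φ, ∀ β ∈ Φ, β - (2 * ⟪β, α⟫ / ⟪α, α⟫) • α ∈ Φ
  crystallographic : ∀ α ∈ Φ, ∀ β ∈ Φ, ∃ n : ℤ, 2 * ⟪β, α⟫ / ⟪α, α⟫ = (n : ℝ)

/-- A root system is irreducible if it is nonempty and cannot be written as a
union of two nonempty mutually orthogonal subsets. -/
def IsIrreducibleRootSet {V : Type*} [NormedAddCommGroup V] [InnerProductSpace ℝ V]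
    (Φ : Set V) : Prop :=
  Φ.Nonempty ∧
    ¬∃ Φ₁ Φ₂ : Set V, Φ₁.Nonempty ∧ Φ₂.Nonempty ∧ Φ = Φ₁ ∪ Φ₂ ∧
      ∀ α ∈ Φ₁, ∀ β ∈ Φ₂, ⟪α, β⟫ = 0

/-- An irreducible root system is not contained in the union of two proper
linear subspaces of its ambient space; in particular it cannot be covered by
two hyperplanes. -/
theorem irreducible_root_system_not_subset_union_of_proper_subspaces
    {V : Type*} [NormedAddCommGroup V] [InnerProductSpace ℝ V] [FiniteDimensional ℝ V]
    {Φ : Set V} (hΦ : IsRootSystem Φ) (hirr : IsIrreducibleRootSet Φ)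
    (V₁ V₂ : Submodule ℝ V) (h₁ : V₁ ≠ ⊤) (h₂ : V₂ ≠ ⊤) :
    ¬(Φ ⊆ ↑V₁ ∪ ↑V₂) := by
  intro hsub
  classical
  obtain ⟨hne, hsplit⟩ := hirr
  -- coefficient of the reflection is nonzero when inner product is nonzero
  have hself : ∀ α ∈ Φ, ⟪α, α⟫ ≠ (0 : ℝ) := fun α hα =>
    inner_self_ne_zero.mpr (hΦ.ne_zero α hα)
  have hcoef : ∀ α ∈ Φ, ∀ β : V, ⟪β, α⟫ ≠ 0 →
      (2 * ⟪β, α⟫ / ⟪α, α⟫ : ℝ) ≠ 0 := by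
    intro α hα β hβα
    exact div_ne_zero (mul_ne_zero two_ne_zero hβα) (hself α hα)
  -- a submodule containing β - c•α and β, with c ≠ 0, contains α
  have hmem : ∀ (W : Submodule ℝ V) (α β : V) (c : ℝ), c ≠ 0 →
      β - c • α ∈ W → β ∈ W → α ∈ W := by
    intro W α β c hc h1 h2
    have : c • α ∈ W := by
      have := W.sub_mem h2 h1
      simpa using this
    have := W.smul_mem c⁻¹ this
    rwa [smul_smul, inv_mul_cancel₀ hc, one_smul] at this
  -- roots outside V₂ lie in V₁, and vice versa
  have hin1 : ∀ α ∈ Φ, α ∉ V₂ → α ∈ V₁ := by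
    intro α hα h2'
    rcases hsub hα with h | h
    · exact h
    · exact absurd h h2'
  have hin2 : ∀ α ∈ Φ, α ∉ V₁ → α ∈ V₂ := by
    intro α hα h1'
    rcases hsub hα with h | h
    · exact absurd h h1'
    · exact h
  -- existence of roots outside each subspace
  have hexists : ∀ W : Submodule ℝ V, W ≠ ⊤ → ∃ α ∈ Φ, α ∉ W := by
    intro W hW
    by_contra h
    push_neg at h
    have : Submodule.span ℝ Φ ≤ W := Submodule.span_le.mpr h
    rw [hΦ.span_eq_top, top_le_iff] at this
    exact hW this
  obtain ⟨a, ha, ha2⟩ := hexists V₂ h₂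
  obtain ⟨b, hb, hb1⟩ := hexists V₁ h₁
  -- key orthogonality: a root outside V₂ is orthogonal to a root outside V₁
  have hAB : ∀ α ∈ Φ, α ∉ V₂ → ∀ β ∈ Φ, β ∉ V₁ → ⟪β, α⟫ = 0 := by
    intro α hα hα2 β hβ hβ1
    by_contra h0
    set c : ℝ := 2 * ⟪β, α⟫ / ⟪α, α⟫ with hc
    have hc0 : c ≠ 0 := hcoef α hα β h0
    have hrefl : β - c • α ∈ Φ := hΦ.reflect_mem α hα β hβ
    rcases hsub hrefl with h | h
    · -- β - c•α ∈ V₁, α ∈ V₁ ⇒ β ∈ V₁, contradiction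
      have hαV1 : α ∈ V₁ := hin1 α hα hα2
      have : β ∈ V₁ := by
        have := V₁.add_mem h (V₁.smul_mem c hαV1)
        simpa using this
      exact hβ1 this
    · -- β - c•α ∈ V₂, β ∈ V₂ ⇒ α ∈ V₂, contradiction
      exact hα2 (hmem V₂ α β c hc0 h (hin2 β hβ hβ1))
  -- key: reflecting a root by a root outside V₂ it is not orthogonal to
  -- gives a root outside V₂
  have hreflA : ∀ α ∈ Φ, α ∉ V₂ → ∀ x ∈ Φ, x ∈ V₂ → ⟪x, α⟫ ≠ 0 →
      x - (2 * ⟪x, α⟫ / ⟪α, α⟫) • α ∈ Φ ∧ x - (2 * ⟪x, α⟫ / ⟪α, α⟫) • α ∉ V₂ := by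
    intro α hα hα2 x hx hx2 h0
    set c : ℝ := 2 * ⟪x, α⟫ / ⟪α, α⟫ with hc
    have hc0 : c ≠ 0 := hcoef α hα x h0
    refine ⟨hΦ.reflect_mem α hα x hx, fun hmem2 => ?_⟩
    exact hα2 (hmem V₂ α x c hc0 hmem2 hx2)
  -- the decomposition
  set Φ₁ : Set V := {x | x ∈ Φ ∧ ∃ α ∈ Φ, α ∉ V₂ ∧ ⟪x, α⟫ ≠ 0} with hΦ₁
  set Φ₂ : Set V := Φ \ Φ₁ with hΦ₂
  apply hsplit
  refine ⟨Φ₁, Φ₂, ⟨a, ha, a, ha, ha2, hself a ha⟩, ⟨b, hb, fun hbΦ₁ => ?_⟩, ?_, ?_⟩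
  · obtain ⟨_, α, hα, hα2, h0⟩ := hbΦ₁
    exact h0 (hAB α hα hα2 b hb hb1)
  · ext x
    constructor
    · intro hx
      by_cases hx1 : x ∈ Φ₁
      · exact Or.inl hx1
      · exact Or.inr ⟨hx, hx1⟩
    · rintro (hx | hx)
      · exact hx.1
      · exact hx.1
  · -- orthogonality of Φ₁ and Φ₂
    rintro x ⟨hx, α, hα, hα2, hxα⟩ y ⟨hy, hy1⟩
    by_contra h0
    -- y is orthogonal to every root outside V₂
    have hyorth : ∀ γ ∈ Φ, γ ∉ V₂ → ⟪y, γ⟫ = 0 := by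
      intro γ hγ hγ2
      by_contra h'
      exact hy1 ⟨hy, γ, hγ, hγ2, h'⟩
    -- case split on whether x ∈ V₂
    by_cases hx2 : x ∈ V₂
    · by_cases hxV1 : x ∈ V₁
      · -- x ∈ V₁ ∩ V₂ : reflect x by α to land outside V₂
        obtain ⟨hrΦ, hr2⟩ := hreflA α hα hα2 x hx hx2 hxα
        have h1 : ⟪y, x - (2 * ⟪x, α⟫ / ⟪α, α⟫) • α⟫ = 0 :=
          hyorth _ hrΦ hr2
        have h2 : ⟪y, α⟫ = 0 := hyorth α hα hα2
        rw [inner_sub_right, real_inner_smul_right, h2, mul_zero, sub_zero] at h1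
        exact h0 (by rw [real_inner_comm]; exact h1)
      · -- x ∉ V₁ : then x ⟂ α by hAB, contradiction
        exact hxα (hAB α hα hα2 x hx hxV1)
    · -- x ∉ V₂ : then ⟪y, x⟫ = 0 directly
      exact h0 (by rw [real_inner_comm]; exact hyorth x hx hx2)
end

section
/- Let Φ be an irreducible root system in a finite-dimensional real inner product space V, let H ⊆ V be a hyperplane (a linear subspace of codimension 1), and let α ∈ Φ ∩ H. Then α has a neighbor in Φ ∖ H, i.e. there exists β ∈ Φ ∖ H such that α and β are linearly independent, non-orthogonal, and no root of Φ lies in the open cone ℝ_{>0}α + ℝ_{>0}β. -/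
open scoped RealInnerProductSpace

/-- Two roots are neighbors if they are linearly independent, non-orthogonal,
and no root lies in the open cone spanned by them. -/
def IsNeighbor {V : Type*} [NormedAddCommGroup V] [InnerProductSpace ℝ V]
    (Φ : Set V) (α β : V) : Prop :=
  LinearIndependent ℝ ![α, β] ∧ ⟪α, β⟫ ≠ 0 ∧
    ¬∃ γ ∈ Φ, ∃ a b : ℝ, 0 < a ∧ 0 < b ∧ γ = a • α + b • β

/-!
Call a root orthogonal to every root off the hyperplane `H = ker g` *isolated*. If `x` is isolated
and `y ∈ Φ ∩ H` is not orthogonal to some `δ ∈ Φ ∖ H`, then `s_y δ ∈ Φ ∖ H` and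
`⟪x, s_y δ⟫ = -(2⟪δ, y⟫/⟪y, y⟫) ⟪x, y⟫`, so `x ⊥ y`. Hence isolated roots are orthogonal to all
other roots, and by irreducibility `α` is not isolated: some root off `H` is not orthogonal to `α`.
Replacing it by its negative and then by its reflection in `α` (which fixes `g`, as `g α = 0`)
gives `β₀ ∈ Φ` with `g β₀ > 0` and `⟪α, β₀⟫ > 0`. Among the roots `γ` with `g γ > 0`, a maximiser
`β` of `⟪α, γ⟫ / g γ` is the neighbor: a root `a α + b β` with `a, b > 0` would have a strictly
larger ratio.
-/

lemma LinearIndependent.pair_of_apply_eq_zero_of_apply_ne_zero {K M : Type*} [Field K]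
    [AddCommGroup M] [Module K M] (f : M →ₗ[K] K) {x y : M} (hx : x ≠ 0) (hfx : f x = 0)
    (hfy : f y ≠ 0) : LinearIndependent K ![x, y] :=
  (LinearIndependent.pair_iff' hx).2 fun a h => hfy (by rw [← h, map_smul, hfx, smul_zero])

section

variable {V : Type*} [NormedAddCommGroup V] [InnerProductSpace ℝ V] {Φ : Set V}

lemma IsRootSystem.inner_self_ne_zero (hΦ : IsRootSystem Φ) {γ : V} (hγ : γ ∈ Φ) :
    ⟪γ, γ⟫ ≠ 0 :=
  _root_.inner_self_ne_zero.2 (hΦ.ne_zero γ hγ)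

lemma IsRootSystem.neg_mem (hΦ : IsRootSystem Φ) {γ : V} (hγ : γ ∈ Φ) : -γ ∈ Φ := by
  have h := hΦ.reflect_mem γ hγ γ hγ
  rwa [mul_div_assoc, div_self (hΦ.inner_self_ne_zero hγ), mul_one, two_smul,
    sub_add_cancel_left] at h

lemma IsRootSystem.exists_apply_ne_zero (hΦ : IsRootSystem Φ) {g : V →ₗ[ℝ] ℝ} (hg : g ≠ 0) :
    ∃ δ ∈ Φ, g δ ≠ 0 := by
  by_contra! h
  have hle : Submodule.span ℝ Φ ≤ LinearMap.ker g := Submodule.span_le.2 h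
  rw [hΦ.span_eq_top, top_le_iff, LinearMap.ker_eq_top] at hle
  exact hg hle

lemma IsRootSystem.exists_apply_pos_inner_pos (hΦ : IsRootSystem Φ) {g : V →ₗ[ℝ] ℝ} {α β : V}
    (hα : α ∈ Φ) (hαH : g α = 0) (hβ : β ∈ Φ) (hgβ : g β ≠ 0) (hαβ : ⟪α, β⟫ ≠ 0) :
    ∃ β' ∈ Φ, 0 < g β' ∧ 0 < ⟪α, β'⟫ := by
  wlog hgβ_pos : 0 < g β generalizing β
  · refine this (hΦ.neg_mem hβ) (by simpa using hgβ) (by simpa using hαβ) ?_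
    simpa using lt_of_le_of_ne (not_lt.1 hgβ_pos) hgβ
  rcases hαβ.lt_or_gt with hneg | hpos
  · refine ⟨_, hΦ.reflect_mem α hα β hβ, by simpa [hαH] using hgβ_pos, ?_⟩
    rw [inner_sub_right, real_inner_smul_right,
      div_mul_cancel₀ _ (hΦ.inner_self_ne_zero hα), real_inner_comm α β]
    linarith
  · exact ⟨β, hβ, hgβ_pos, hpos⟩

lemma IsIrreducibleRootSet.exists_apply_ne_zero_inner_ne_zero (hirr : IsIrreducibleRootSet Φ)
    (hΦ : IsRootSystem Φ) {g : V →ₗ[ℝ] ℝ} (hg : g ≠ 0) {α : V} (hα : α ∈ Φ) :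
    ∃ β ∈ Φ, g β ≠ 0 ∧ ⟪α, β⟫ ≠ 0 := by
  by_contra! hαiso
  set Φ₁ := {γ ∈ Φ | ∀ δ ∈ Φ, g δ ≠ 0 → ⟪γ, δ⟫ = 0}
  obtain ⟨δ₀, hδ₀, hgδ₀⟩ := hΦ.exists_apply_ne_zero hg
  refine hirr.2 ⟨Φ₁, Φ \ Φ₁, ⟨α, hα, hαiso⟩,
    ⟨δ₀, hδ₀, fun h => hΦ.inner_self_ne_zero hδ₀ (h.2 δ₀ hδ₀ hgδ₀)⟩,
    (Set.union_sdiff_cancel (Set.sep_subset _ _)).symm, ?_⟩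
  rintro x ⟨-, hxiso⟩ y ⟨hy, hyΦ₁⟩
  rcases ne_or_eq (g y) 0 with hgy | hgy
  · exact hxiso y hy hgy
  obtain ⟨δ, hδ, hgδ, hyδ⟩ : ∃ δ ∈ Φ, g δ ≠ 0 ∧ ⟪y, δ⟫ ≠ 0 := by
    simpa [Φ₁, hy] using hyΦ₁
  have h := hxiso _ (hΦ.reflect_mem y hy δ hδ) (by simpa [hgy] using hgδ)
  rw [inner_sub_right, real_inner_smul_right, hxiso δ hδ hgδ, zero_sub, neg_eq_zero] at h
  have hk : 2 * ⟪δ, y⟫ / ⟪y, y⟫ ≠ 0 :=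
    div_ne_zero (mul_ne_zero two_ne_zero (real_inner_comm y δ ▸ hyδ))
      (hΦ.inner_self_ne_zero hy)
  exact (mul_eq_zero.1 h).resolve_left hk

lemma exists_isNeighbor_apply_pos (hfin : Φ.Finite) {g : V →ₗ[ℝ] ℝ} {α β₀ : V}
    (hαH : g α = 0) (hβ₀ : β₀ ∈ Φ) (hgβ₀ : 0 < g β₀) (hαβ₀ : 0 < ⟪α, β₀⟫) :
    ∃ β ∈ Φ, 0 < g β ∧ IsNeighbor Φ α β := by
  obtain ⟨β, ⟨hβ, hgβ⟩, hmax⟩ := Set.exists_max_image {γ | γ ∈ Φ ∧ 0 < g γ}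
    (fun γ => ⟪α, γ⟫ / g γ) (hfin.subset fun _ h => h.1) ⟨β₀, hβ₀, hgβ₀⟩
  have hαβ : 0 < ⟪α, β⟫ :=
    (div_pos_iff_of_pos_right hgβ).1 ((div_pos hαβ₀ hgβ₀).trans_le (hmax β₀ ⟨hβ₀, hgβ₀⟩))
  have hα : α ≠ 0 := by
    rintro rfl
    simp at hαβ₀
  refine ⟨β, hβ, hgβ, .pair_of_apply_eq_zero_of_apply_ne_zero g hα hαH hgβ.ne', hαβ.ne', ?_⟩
  rintro ⟨γ, hγ, a, b, ha, hb, rfl⟩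
  have hgγ : g (a • α + b • β) = b * g β := by simp [hαH]
  have hle := hmax _ ⟨hγ, hgγ ▸ mul_pos hb hgβ⟩
  rw [hgγ, inner_add_right, real_inner_smul_right, real_inner_smul_right,
    div_le_div_iff₀ (mul_pos hb hgβ) hgβ] at hle
  nlinarith [mul_pos (mul_pos ha (real_inner_self_pos.2 hα)) hgβ]

end

theorem exists_neighbor_not_mem_hyperplane_general
    {V : Type*} [NormedAddCommGroup V] [InnerProductSpace ℝ V]
    {Φ : Set V} (hΦ : IsRootSystem Φ) (hirr : IsIrreducibleRootSet Φ)
    (g : V →ₗ[ℝ] ℝ) (hg : g ≠ 0) {α : V} (hα : α ∈ Φ) (hαH : g α = 0) :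
    ∃ β ∈ Φ, g β ≠ 0 ∧ IsNeighbor Φ α β := by
  obtain ⟨β₀, hβ₀, hgβ₀, hαβ₀⟩ := hirr.exists_apply_ne_zero_inner_ne_zero hΦ hg hα
  obtain ⟨β₁, hβ₁, hgβ₁, hαβ₁⟩ := hΦ.exists_apply_pos_inner_pos hα hαH hβ₀ hgβ₀ hαβ₀
  obtain ⟨β, hβ, hgβ, hneighbor⟩ := exists_isNeighbor_apply_pos hΦ.finite hαH hβ₁ hgβ₁ hαβ₁
  exact ⟨β, hβ, hgβ.ne', hneighbor⟩

/-- If `Φ` is an irreducible root system, `H` a hyperplane (the kernel of a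
nonzero linear functional) and `α ∈ Φ ∩ H`, then `α` has a neighbor in
`Φ ∖ H`. -/
theorem exists_neighbor_not_mem_hyperplane
    {V : Type*} [NormedAddCommGroup V] [InnerProductSpace ℝ V] [FiniteDimensional ℝ V]
    {Φ : Set V} (hΦ : IsRootSystem Φ) (hirr : IsIrreducibleRootSet Φ)
    (g : V →ₗ[ℝ] ℝ) (hg : g ≠ 0) {α : V} (hα : α ∈ Φ) (hαH : g α = 0) :
    ∃ β ∈ Φ, g β ≠ 0 ∧ IsNeighbor Φ α β :=
  exists_neighbor_not_mem_hyperplane_general hΦ hirr g hg hα hαH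
end

section
/- Let K be a commutative unital ring and let G be a functor from the category of commutative unital K-algebras to the category of groups. Let A and A' be commutative unital K-algebras, let f be a natural transformation from the functor R ↦ Hom_{K-alg}(A, R) to the underlying-set functor of G, and let f' be a natural transformation from R ↦ Hom_{K-alg}(A', R) to the underlying-set functor of G. For each K-algebra R let H(R) ≤ G(R) be the subgroup generated by the image f_R(Hom_{K-alg}(A, R)). Suppose f'_R(Hom_{K-alg}(A', R)) ⊆ H(R) for all R. Then there exists n ≥ 0 such that for all commutative unital K-algebras R, f'_R(Hom_{K-alg}(A', R)) ⊆ (f_R(Hom_{K-alg}(A, R)) ∪ {1} ∪ f_R(Hom_{K-alg}(A, R))^{-1})^n, where the right-hand side is the set of all products of n elements each of which is a value of f_R, the identity, or an inverse of a value of f_R. In particular, the width of elements of f'(X') with respect to the generating set f(X) is bounded uniformly in R. -/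
/-!
Evaluating `f'` at the generic point `𝟙 : A' → A'` gives an element of `G(A')` which, by
hypothesis, is a word of some length `n` in the values of `f` and their inverses. By the
Yoneda lemma, `f'_R x` is the image of this element under `G(x) : G(A') → G(R)`, and by
naturality of `f` the letters of the word are carried to values of `f_R` or their inverses.
So `n` works for every `R`.
-/

open Pointwise

universe u

/-- A functor from the category of commutative unital `K`-algebras (in a fixed
universe) to the category of groups, presented explicitly. -/
structure GroupFunctor (K : Type u) [CommRing K] where
  obj : (R : Type u) → [CommRing R] → [Algebra K R] → GrpCat.{u}
  map : {R S : Type u} → [CommRing R] → [Algebra K R] → [CommRing S] → [Algebra K S] →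
    (R →ₐ[K] S) → (obj R →* obj S)
  map_id : ∀ (R : Type u) [CommRing R] [Algebra K R],
    map (AlgHom.id K R) = MonoidHom.id (obj R)
  map_comp : ∀ {R S T : Type u} [CommRing R] [Algebra K R] [CommRing S] [Algebra K S]
    [CommRing T] [Algebra K T] (φ : R →ₐ[K] S) (ψ : S →ₐ[K] T),
    map (ψ.comp φ) = (map ψ).comp (map φ)

section SymmetricWords

variable {G H : Type*} [Group G] [Group H]

theorem Set.union_one_union_inv_pow_inv (s : Set G) (n : ℕ) :
    ((s ∪ {1} ∪ s⁻¹) ^ n)⁻¹ = (s ∪ {1} ∪ s⁻¹) ^ n := by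
  rw [← inv_pow, Set.union_inv, Set.union_inv, inv_inv, Set.inv_singleton, inv_one,
    Set.union_comm _ s, ← Set.union_assoc, Set.union_right_comm]

theorem Subgroup.exists_mem_union_one_union_inv_pow_of_mem_closure {s : Set G} {x : G}
    (hx : x ∈ Subgroup.closure s) : ∃ n : ℕ, x ∈ (s ∪ {1} ∪ s⁻¹) ^ n := by
  induction hx using Subgroup.closure_induction with
  | mem x hx => exact ⟨1, by simp [hx]⟩
  | one => exact ⟨0, Set.mem_one.mpr rfl⟩
  | mul x y _ _ ihx ihy =>
    obtain ⟨m, hm⟩ := ihx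
    obtain ⟨n, hn⟩ := ihy
    exact ⟨m + n, pow_add (s ∪ {1} ∪ s⁻¹) m n ▸ Set.mul_mem_mul hm hn⟩
  | inv x _ ih =>
    obtain ⟨n, hn⟩ := ih
    exact ⟨n, Set.union_one_union_inv_pow_inv s n ▸ Set.inv_mem_inv.mpr hn⟩

theorem MonoidHom.image_union_one_union_inv_pow_subset (φ : G →* H) {s : Set G} {t : Set H}
    (hst : φ '' s ⊆ t) (n : ℕ) :
    φ '' ((s ∪ {1} ∪ s⁻¹) ^ n) ⊆ (t ∪ {1} ∪ t⁻¹) ^ n := by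
  rw [Set.image_pow, Set.image_union, Set.image_union, Set.image_inv, Set.image_singleton,
    map_one]
  exact Set.pow_subset_pow_left <|
    Set.union_subset_union (Set.union_subset_union_left _ hst) (Set.inv_subset_inv.mpr hst)

end SymmetricWords

namespace GroupFunctor

variable {K : Type u} [CommRing K] (G : GroupFunctor K) (A : Type u) [CommRing A] [Algebra K A]
  (f : (R : Type u) → [CommRing R] → [Algebra K R] → (A →ₐ[K] R) → G.obj R)

theorem eq_map_generic_point
    (hf : ∀ {R S : Type u} [CommRing R] [Algebra K R] [CommRing S] [Algebra K S]
      (φ : R →ₐ[K] S) (x : A →ₐ[K] R), G.map φ (f R x) = f S (φ.comp x))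
    (R : Type u) [CommRing R] [Algebra K R] (x : A →ₐ[K] R) :
    f R x = G.map x (f A (AlgHom.id K A)) := by
  rw [hf x (AlgHom.id K A), AlgHom.comp_id]

theorem image_map_range_subset
    (hf : ∀ {R S : Type u} [CommRing R] [Algebra K R] [CommRing S] [Algebra K S]
      (φ : R →ₐ[K] S) (x : A →ₐ[K] R), G.map φ (f R x) = f S (φ.comp x))
    {R S : Type u} [CommRing R] [Algebra K R] [CommRing S] [Algebra K S] (φ : R →ₐ[K] S) :
    G.map φ '' Set.range (f R) ⊆ Set.range (f S) := by
  rintro _ ⟨_, ⟨x, rfl⟩, rfl⟩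
  exact ⟨φ.comp x, (hf φ x).symm⟩

end GroupFunctor

/-- Let `G` be a group-valued functor on commutative unital `K`-algebras,
`f` a natural transformation from `R ↦ Hom_{K-alg}(A, R)` to the underlying-set
functor of `G`, and `f'` a natural transformation from `R ↦ Hom_{K-alg}(A', R)`
to the underlying-set functor of `G`.  If every value of `f'` lies in the
subgroup generated by the values of `f`, then there is a uniform bound `n` such
that every value of `f'` is a product of `n` factors each of which is a value
of `f`, the identity, or an inverse of a value of `f`. -/
theorem bounded_width_of_scheme_generated
    {K : Type u} [CommRing K] (G : GroupFunctor K)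
    (A A' : Type u) [CommRing A] [Algebra K A] [CommRing A'] [Algebra K A']
    (f : (R : Type u) → [CommRing R] → [Algebra K R] → (A →ₐ[K] R) → G.obj R)
    (hf : ∀ {R S : Type u} [CommRing R] [Algebra K R] [CommRing S] [Algebra K S]
      (φ : R →ₐ[K] S) (x : A →ₐ[K] R), G.map φ (f R x) = f S (φ.comp x))
    (f' : (R : Type u) → [CommRing R] → [Algebra K R] → (A' →ₐ[K] R) → G.obj R)
    (hf' : ∀ {R S : Type u} [CommRing R] [Algebra K R] [CommRing S] [Algebra K S]
      (φ : R →ₐ[K] S) (x : A' →ₐ[K] R), G.map φ (f' R x) = f' S (φ.comp x))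
    (hsub : ∀ (R : Type u) [CommRing R] [Algebra K R] (x : A' →ₐ[K] R),
      f' R x ∈ Subgroup.closure (Set.range (f R))) :
    ∃ n : ℕ, ∀ (R : Type u) [CommRing R] [Algebra K R] (x : A' →ₐ[K] R),
      f' R x ∈ (Set.range (f R) ∪ {1} ∪ (Set.range (f R))⁻¹) ^ n := by
  obtain ⟨n, hn⟩ := Subgroup.exists_mem_union_one_union_inv_pow_of_mem_closure
    (hsub A' (AlgHom.id K A'))
  refine ⟨n, fun R _ _ x => ?_⟩
  rw [G.eq_map_generic_point A' f' hf' R x]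
  exact (G.map x).image_union_one_union_inv_pow_subset (G.image_map_range_subset A f hf x) n
    (Set.mem_image_of_mem _ hn)
end

section
/- Let K be a commutative unital ring, let s, a_1, …, a_N ∈ K, and let n ≥ 1 be such that s^n lies in the ideal of K generated by s·a_1, …, s·a_N. Then for every m ≥ 1, the element s^{n(N(m−1)+1)} lies in the ideal of K generated by a_1^m, …, a_N^m. -/
/-- If `s ^ n` lies in the ideal generated by `s * a 1, …, s * a N`, then for
every `m ≥ 1` the power `s ^ (n * (N * (m - 1) + 1))` lies in the ideal
generated by the `m`-th powers `a i ^ m`. -/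
theorem pow_mem_span_pow_of_pow_mem_span_mul
    {K : Type*} [CommRing K] (s : K) (N : ℕ) (a : Fin N → K) (n : ℕ) (hn : 1 ≤ n)
    (h : s ^ n ∈ Ideal.span (Set.range fun i => s * a i)) :
    ∀ m : ℕ, 1 ≤ m →
      s ^ (n * (N * (m - 1) + 1)) ∈ Ideal.span (Set.range fun i => a i ^ m) := by
  intro m hm
  obtain ⟨c, hc⟩ := (Submodule.mem_span_range_iff_exists_fun K).mp h
  set M := N * (m - 1) + 1 with hM
  set t : K := ∑ i, c i * a i with ht
  have hst : s ^ n = s * t := by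
    rw [ht, Finset.mul_sum, ← hc]
    simp [mul_comm, mul_assoc, mul_left_comm]
  have key : t ^ M ∈ Ideal.span (Set.range fun i => a i ^ m) := by
    have h2 := Ideal.sum_pow_mem_span_pow Finset.univ (fun i => c i * a i) (m - 1)
    rw [Finset.card_univ, Fintype.card_fin, Nat.sub_add_cancel hm] at h2
    refine Ideal.span_le.mpr ?_ h2
    rintro _ ⟨i, -, rfl⟩
    show (c i * a i) ^ m ∈ _
    rw [mul_pow]
    exact Ideal.mul_mem_left _ _ (Ideal.subset_span ⟨i, rfl⟩)
  have heq : s ^ (n * M) = s ^ M * t ^ M := by rw [pow_mul, hst, mul_pow]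
  rw [heq]
  exact Ideal.mul_mem_left _ _ key
end

section
/- Let G be a group, N a normal subgroup of G, and Q a subgroup of G with N ∩ Q = {1} and NQ = G (so G is the internal semidirect product N ⋊ Q). Let S ⊆ N be a subset such that G is generated by Q ∪ S. Then N is generated by the set of conjugates {q s q^{-1} : q ∈ Q, s ∈ S}. -/
/-- Let `G = N ⋊ Q` be an internal semidirect product and `S ⊆ N` a subset such
that `G` is generated by `Q ∪ S`. Then `N` is generated by the `Q`-conjugates
of elements of `S`. -/
theorem normal_part_generated_by_conjugates_of_semidirect
    {G : Type*} [Group G] (N Q : Subgroup G) [N.Normal]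
    (hNQ_inf : N ⊓ Q = ⊥)
    (hNQ_mul : ∀ g : G, ∃ n ∈ N, ∃ q ∈ Q, g = n * q)
    (S : Set G) (hS : S ⊆ ↑N)
    (hgen : Subgroup.closure (↑Q ∪ S) = ⊤) :
    Subgroup.closure {x : G | ∃ q ∈ Q, ∃ s ∈ S, x = q * s * q⁻¹} = N := by
  set T : Set G := {x : G | ∃ q ∈ Q, ∃ s ∈ S, x = q * s * q⁻¹} with hT
  set H := Subgroup.closure T with hH
  -- Q normalizes H
  have hnorm : ∀ q ∈ Q, ∀ h ∈ H, q * h * q⁻¹ ∈ H := by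
    intro q hq h hh
    induction hh using Subgroup.closure_induction with
    | mem x hx =>
      obtain ⟨q', hq', s, hs, rfl⟩ := hx
      apply Subgroup.subset_closure
      exact ⟨q * q', mul_mem hq hq', s, hs, by group⟩
    | one => simpa using one_mem H
    | mul x y _ _ hx hy =>
      have : q * (x * y) * q⁻¹ = (q * x * q⁻¹) * (q * y * q⁻¹) := by group
      rw [this]; exact mul_mem hx hy
    | inv x _ hx =>
      have : q * x⁻¹ * q⁻¹ = (q * x * q⁻¹)⁻¹ := by group
      rw [this]; exact inv_mem hx
  -- every element factors as h * q
  have hfact : ∀ g : G, ∃ h ∈ H, ∃ q ∈ Q, g = h * q := by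
    intro g
    have hg : g ∈ Subgroup.closure (↑Q ∪ S) := by rw [hgen]; trivial
    induction hg using Subgroup.closure_induction with
    | mem x hx =>
      rcases hx with hx | hx
      · exact ⟨1, one_mem H, x, hx, by group⟩
      · refine ⟨x, Subgroup.subset_closure ⟨1, one_mem Q, x, hx, by group⟩,
          1, one_mem Q, by group⟩
    | one => exact ⟨1, one_mem H, 1, one_mem Q, by group⟩
    | mul x y _ _ hx hy =>
      obtain ⟨h1, hh1, q1, hq1, rfl⟩ := hx
      obtain ⟨h2, hh2, q2, hq2, rfl⟩ := hy
      refine ⟨h1 * (q1 * h2 * q1⁻¹), mul_mem hh1 (hnorm q1 hq1 h2 hh2),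
        q1 * q2, mul_mem hq1 hq2, by group⟩
    | inv x _ hx =>
      obtain ⟨h, hh, q, hq, rfl⟩ := hx
      exact ⟨q⁻¹ * h⁻¹ * q⁻¹⁻¹, hnorm q⁻¹ (inv_mem hq) h⁻¹ (inv_mem hh),
        q⁻¹, inv_mem hq, by group⟩
  have hHN : H ≤ N := by
    rw [hH, Subgroup.closure_le]
    rintro x ⟨q, hq, s, hs, rfl⟩
    exact Subgroup.Normal.conj_mem ‹N.Normal› s (hS hs) q
  refine le_antisymm hHN ?_
  intro n hn
  obtain ⟨h, hh, q, hq, hEq⟩ := hfact n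
  have hqN : q ∈ N := by
    have : q = h⁻¹ * n := by rw [hEq]; group
    rw [this]; exact mul_mem (inv_mem (hHN hh)) hn
  have : q ∈ (⊥ : Subgroup G) := hNQ_inf ▸ ⟨hqN, hq⟩
  rw [Subgroup.mem_bot] at this
  subst this
  simpa [hEq] using hh
end

section
/- Let Ψ be a root system in a finite-dimensional real inner product space and let Σ ⊆ Ψ be a nonempty saturated special closed subset, i.e. Σ = Ψ ∩ C for some convex cone C with C ∩ (−C) = {0}. Then: (1) Σ contains an extreme root, i.e. a root α ∈ Σ such that (1/2)α ∉ Σ and ℝ_{≥0}α is an extreme ray of the convex cone generated by Σ; (2) for any extreme root α ∈ Σ, the set Σ ∖ ℝα is again a saturated special closed subset of Ψ; and (3) if the linear span of Σ has dimension at least 2, then for every given element σ ∈ Σ there exists an extreme root α ∈ Σ linearly independent from σ. -/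
open scoped RealInnerProductSpace

/-- The convex cone generated by a set: all finite nonnegative combinations. -/
def coneGen {V : Type*} [AddCommGroup V] [Module ℝ V] (S : Set V) : Set V :=
  {x | ∃ (n : ℕ) (c : Fin n → ℝ) (v : Fin n → V),
    (∀ i, 0 ≤ c i) ∧ (∀ i, v i ∈ S) ∧ x = ∑ i, c i • v i}

/-- `ℝ≥0 • α` is an extreme ray of the convex cone `D`: the ray is contained in
`D` and whenever `α = x + y` with `x, y ∈ D`, both `x` and `y` lie on the
ray. -/
def IsExtremeRayOf {V : Type*} [AddCommGroup V] [Module ℝ V]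
    (D : Set V) (α : V) : Prop :=
  (∀ t : ℝ, 0 ≤ t → t • α ∈ D) ∧
    ∀ x ∈ D, ∀ y ∈ D, x + y = α →
      (∃ t : ℝ, 0 ≤ t ∧ x = t • α) ∧ (∃ t : ℝ, 0 ≤ t ∧ y = t • α)

/-- An extreme root of `S`: a root `α ∈ S` with `(1/2)α ∉ S` such that
`ℝ≥0 • α` is an extreme ray of the convex cone generated by `S`. -/
def IsExtremeRoot {V : Type*} [AddCommGroup V] [Module ℝ V]
    (S : Set V) (α : V) : Prop :=
  α ∈ S ∧ (2⁻¹ : ℝ) • α ∉ S ∧ IsExtremeRayOf (coneGen S) α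

/-
The cone `K` generated by `S` lies in `C ∪ {0}`, hence is salient. A finite set contains a minimal
subset `T` generating the same cone, and salience of `K` makes every `β ∈ T` span an extreme ray
of `K`; the shortest multiple of `β` lying in `S` is then an extreme root. If `S` spans a space of
dimension at least `2`, some `β ∈ T` is off the line of a given `σ`. Finally, an extreme ray
`ℝ≥0 α` is not in the cone generated by the vectors of `K` off the line `ℝα`, so that cone meets
`Ψ` exactly in `S ∖ ℝα`.
-/

open PointedCone

theorem Set.Finite.exists_subset_span_eq_forall_notMem_span_diff {R M : Type*} [Semiring R]
    [AddCommMonoid M] [Module R M] {S : Set M} (hS : S.Finite) :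
    ∃ T ⊆ S, Submodule.span R T = Submodule.span R S ∧
      ∀ β ∈ T, β ∉ Submodule.span R (T \ {β}) := by
  obtain ⟨T, ⟨hTS, hTspan⟩, hTmin⟩ := (hS.finite_subsets.subset fun T hT => hT.1).exists_minimal
    (s := {T | T ⊆ S ∧ Submodule.span R T = Submodule.span R S}) ⟨S, subset_rfl, rfl⟩
  refine ⟨T, hTS, hTspan, fun β hβ hβmem => ?_⟩
  have hspan : Submodule.span R (T \ {β}) = Submodule.span R S := by
    rw [← Submodule.span_insert_eq_span hβmem, Set.insert_sdiff_self_of_mem hβ, hTspan]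
  exact (hTmin ⟨Set.sdiff_subset.trans hTS, hspan⟩ Set.sdiff_subset hβ).2 rfl

theorem LinearIndependent.pair_of_notMem_span_singleton {K V : Type*} [DivisionRing K]
    [AddCommGroup V] [Module K V] {x y : V} (hy : y ≠ 0) (hx : x ∉ K ∙ y) :
    LinearIndependent K ![x, y] :=
  linearIndependent_fin2.2 ⟨hy, fun a h => hx (Submodule.mem_span_singleton.2 ⟨a, h⟩)⟩

theorem exists_mem_notMem_span_singleton_of_two_le_finrank {K V : Type*} [DivisionRing K]
    [AddCommGroup V] [Module K V] {T : Set V} (hT : 2 ≤ Module.finrank K (Submodule.span K T))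
    (σ : V) : ∃ β ∈ T, β ∉ K ∙ σ := by
  by_contra! h
  have := (Submodule.finrank_mono (Submodule.span_le.2 h)).trans (finrank_span_le_card {σ})
  simp only [Set.toFinset_singleton, Finset.card_singleton] at this
  omega

section Cone

variable {V : Type*} [AddCommGroup V] [Module ℝ V]

theorem coneGen_eq_hull (S : Set V) : coneGen S = hull ℝ S := by
  ext x
  simp only [coneGen, SetLike.mem_coe, Submodule.mem_span_set', Set.mem_ofPred_eq]
  constructor
  · rintro ⟨n, c, v, hc, hv, rfl⟩
    exact ⟨n, fun i => ⟨c i, hc i⟩, fun i => ⟨v i, hv i⟩, rfl⟩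
  · rintro ⟨n, f, g, rfl⟩
    exact ⟨n, fun i => f i, fun i => g i, fun i => (f i).2, fun i => (g i).2, rfl⟩

theorem PointedCone.span_hull (s : Set V) :
    Submodule.span ℝ (hull ℝ s : Set V) = Submodule.span ℝ s :=
  Submodule.span_span_of_tower _ _ _

theorem ConvexCone.Salient.eq_zero {C : ConvexCone ℝ V} (hC : C.Salient) {x : V} (hx : x ∈ C)
    (hnx : -x ∈ C) : x = 0 :=
  by_contra fun h => hC x hx h hnx

theorem ConvexCone.eq_zero_or_mem_of_mem_hull {C : ConvexCone ℝ V} {S : Set V} (hS : S ⊆ C)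
    {x : V} (hx : x ∈ PointedCone.hull ℝ S) : x = 0 ∨ x ∈ C := by
  refine Submodule.span_induction (fun x hx => .inr (hS hx)) (.inl rfl) ?_ ?_ hx
  · rintro x y - - (rfl | hx) hy
    · simpa using hy
    rcases hy with rfl | hy
    · simpa using Or.inr hx
    · exact .inr (C.add_mem hx hy)
  · rintro a x - (rfl | hx)
    · simp
    rcases a.2.eq_or_lt with ha | ha
    · left
      rw [← Nonneg.coe_smul, ← ha, zero_smul]
    · exact .inr (C.smul_mem ha hx)

theorem ConvexCone.Salient.hull_of_subset {C : ConvexCone ℝ V} (hC : C.Salient) {S : Set V}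
    (hS : S ⊆ C) : (PointedCone.hull ℝ S : ConvexCone ℝ V).Salient := by
  intro x hx hx0 hnx
  exact hC x ((C.eq_zero_or_mem_of_mem_hull hS hx).resolve_left hx0) hx0
    ((C.eq_zero_or_mem_of_mem_hull hS hnx).resolve_left (neg_ne_zero.2 hx0))

end Cone

section ExtremeRay

variable {V : Type*} [AddCommGroup V] [Module ℝ V]

theorem IsExtremeRayOf.smul {K : PointedCone ℝ V} {α : V} (hα : IsExtremeRayOf K α) {t : ℝ}
    (ht : 0 < t) : IsExtremeRayOf K (t • α) := by
  refine ⟨fun s hs => ?_, fun x hx y hy hxy => ?_⟩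
  · rw [smul_smul]
    exact hα.1 _ (mul_nonneg hs ht.le)
  have hsum : t⁻¹ • x + t⁻¹ • y = α := by rw [← smul_add, hxy, inv_smul_smul₀ ht.ne']
  obtain ⟨⟨a, ha, hxa⟩, ⟨b, hb, hyb⟩⟩ :=
    hα.2 _ ((K.smul_mem_iff (inv_pos.2 ht)).2 hx) _ ((K.smul_mem_iff (inv_pos.2 ht)).2 hy) hsum
  refine ⟨⟨a, ha, ?_⟩, ⟨b, hb, ?_⟩⟩
  · rw [← smul_inv_smul₀ ht.ne' x, hxa, smul_comm]
  · rw [← smul_inv_smul₀ ht.ne' y, hyb, smul_comm]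

theorem isExtremeRayOf_hull_of_notMem_hull_diff {T : Set V}
    (hT : (hull ℝ T : ConvexCone ℝ V).Salient) {β : V} (hβ : β ∈ T)
    (hmin : β ∉ hull ℝ (T \ {β})) : IsExtremeRayOf (hull ℝ T) β := by
  refine ⟨fun t ht => (hull ℝ T).smul_mem ht (subset_hull hβ), fun x hx y hy hxy => ?_⟩
  have hsub : hull ℝ (T \ {β}) ≤ hull ℝ T := Submodule.span_mono Set.sdiff_subset
  rw [SetLike.mem_coe, ← Set.insert_sdiff_self_of_mem hβ] at hx hy
  obtain ⟨a, u, hu, rfl⟩ := Submodule.mem_span_insert.1 hx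
  obtain ⟨b, w, hw, rfl⟩ := Submodule.mem_span_insert.1 hy
  have key : (1 - ((a : ℝ) + b)) • β = u + w := by
    rw [sub_smul, one_smul, add_smul]
    nth_rewrite 1 [← hxy]
    simp only [Nonneg.coe_smul]
    abel
  have hab : 1 ≤ (a : ℝ) + b := by
    by_contra! h
    apply hmin
    rw [← (hull ℝ _).smul_mem_iff (sub_pos.2 h), key]
    exact add_mem hu hw
  have huw : u + w = 0 := by
    refine hT.eq_zero (hsub (add_mem hu hw)) ?_
    rw [← key, ← neg_smul, neg_sub]
    exact (hull ℝ T).smul_mem (sub_nonneg.2 hab) (subset_hull hβ)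
  have hu0 : u = 0 := hT.eq_zero (hsub hu) (by rw [add_eq_zero_iff_neg_eq.1 huw]; exact hsub hw)
  rw [hu0, zero_add] at huw
  subst hu0 huw
  exact ⟨⟨a, a.2, add_zero _⟩, ⟨b, b.2, add_zero _⟩⟩

theorem IsExtremeRayOf.notMem_hull {K : PointedCone ℝ V} {α : V} (hα : IsExtremeRayOf K α)
    (hα0 : α ≠ 0) {T : Set V} (hTK : T ⊆ K) (hT : ∀ x ∈ T, ∀ t : ℝ, x ≠ t • α) :
    α ∉ hull ℝ T := by
  intro hmem
  -- Some term `f i • g i` of a conical combination giving `α` is nonzero; extremality puts it on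
  -- the ray of `α`, and so `g i` too.
  obtain ⟨n, f, g, hfg⟩ := Submodule.mem_span_set'.1 hmem
  obtain ⟨i, -, hi⟩ := Finset.exists_ne_zero_of_sum_ne_zero (hfg ▸ hα0)
  have hrest : ∑ j ∈ Finset.univ.erase i, f j • (g j : V) ∈ K :=
    sum_mem fun j _ => Submodule.smul_mem K (f j) (hTK (g j).2)
  obtain ⟨⟨t, -, ht⟩, -⟩ := hα.2 _ (Submodule.smul_mem K (f i) (hTK (g i).2)) _ hrest
    (by rw [Finset.add_sum_erase _ (fun j => f j • (g j : V)) (Finset.mem_univ i), hfg])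
  have hfi : (f i : ℝ) ≠ 0 := fun h => hi (by rw [← Nonneg.coe_smul, h, zero_smul])
  refine hT _ (g i).2 ((f i : ℝ)⁻¹ * t) ?_
  rw [mul_smul, ← ht, ← Nonneg.coe_smul, inv_smul_smul₀ hfi]

end ExtremeRay

section ExtremeRoot

variable {V : Type*} [AddCommGroup V] [Module ℝ V]

/-- The shortest positive multiple of `β` lying in `S` is an extreme root. -/
theorem exists_isExtremeRoot_smul {S : Set V} (hS : S.Finite) {β : V} (hβS : β ∈ S) (hβ0 : β ≠ 0)
    (hβ : IsExtremeRayOf (coneGen S) β) : ∃ t : ℝ, 0 < t ∧ IsExtremeRoot S (t • β) := by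
  have hM : {t : ℝ | 0 < t ∧ t • β ∈ S}.Finite :=
    (hS.preimage (smul_left_injective ℝ hβ0).injOn).subset fun t ht => ht.2
  obtain ⟨t, ⟨ht, htS⟩, htmin⟩ := hM.exists_minimal ⟨1, one_pos, by rwa [one_smul]⟩
  refine ⟨t, ht, htS, fun hhalf => ?_, ?_⟩
  · rw [smul_smul] at hhalf
    have := htmin ⟨by positivity, hhalf⟩ (by linarith)
    linarith
  · rw [coneGen_eq_hull] at hβ ⊢
    exact hβ.smul ht

theorem IsExtremeRoot.diff_line_eq_inter_hull {Ψ : Set V} (hΨ : ∀ x ∈ Ψ, x ≠ 0)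
    {C : ConvexCone ℝ V} (hC : C.Salient) {S : Set V} (hS : S = Ψ ∩ C) {α : V}
    (hα : IsExtremeRoot S α) :
    S \ {x | ∃ t : ℝ, x = t • α} = Ψ ∩ hull ℝ (S \ {x | ∃ t : ℝ, x = t • α}) := by
  obtain ⟨hαS, -, hray⟩ := hα
  have hSC : S ⊆ C := hS ▸ Set.inter_subset_right
  have hsal := hC.hull_of_subset hSC
  have hsub : hull ℝ (S \ {x | ∃ t : ℝ, x = t • α}) ≤ hull ℝ S :=
    Submodule.span_mono Set.sdiff_subset
  rw [coneGen_eq_hull] at hray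
  ext x
  refine ⟨fun ⟨hxS, hxα⟩ => ⟨(hS ▸ hxS).1, subset_hull ⟨hxS, hxα⟩⟩, fun ⟨hxΨ, hx⟩ => ?_⟩
  have hx0 := hΨ x hxΨ
  have hxS : x ∈ S := hS ▸ ⟨hxΨ, (C.eq_zero_or_mem_of_mem_hull hSC (hsub hx)).resolve_left hx0⟩
  refine ⟨hxS, fun ⟨t, hxt⟩ => ?_⟩
  rcases le_or_gt t 0 with ht | ht
  · refine hx0 (hsal.eq_zero (hsub hx) ?_)
    rw [hxt, ← neg_smul]
    exact (hull ℝ S).smul_mem (neg_nonneg.2 ht) (subset_hull hαS)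
  · refine hray.notMem_hull (hΨ α (hS ▸ hαS).1) (Set.sdiff_subset.trans subset_hull)
      (fun y hy => not_exists.1 hy.2) ?_
    rwa [← (hull ℝ _).smul_mem_iff ht, ← hxt]

theorem exists_hull_eq_forall_exists_isExtremeRoot_smul {S : Set V} (hS : S.Finite)
    (hS0 : ∀ x ∈ S, x ≠ 0) (hsal : (hull ℝ S : ConvexCone ℝ V).Salient) :
    ∃ T, hull ℝ T = hull ℝ S ∧ ∀ β ∈ T, ∃ t : ℝ, 0 < t ∧ IsExtremeRoot S (t • β) := by
  obtain ⟨T, hTS, hTS_hull, hTmin⟩ :=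
    hS.exists_subset_span_eq_forall_notMem_span_diff (R := {c : ℝ // 0 ≤ c})
  change hull ℝ T = hull ℝ S at hTS_hull
  refine ⟨T, hTS_hull, fun β hβ => exists_isExtremeRoot_smul hS (hTS hβ) (hS0 β (hTS hβ)) ?_⟩
  rw [coneGen_eq_hull, ← hTS_hull]
  exact isExtremeRayOf_hull_of_notMem_hull_diff (hTS_hull ▸ hsal) hβ (hTmin β hβ)

end ExtremeRoot

theorem saturated_special_closed_extreme_roots_general
    {V : Type*} [NormedAddCommGroup V] [InnerProductSpace ℝ V]
    {Ψ : Set V} (hΨ : IsRootSystem Ψ)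
    (C : ConvexCone ℝ V) (hC : ∀ x ∈ C, -x ∈ C → x = 0)
    (S : Set V) (hS : S = Ψ ∩ ↑C) (hne : S.Nonempty) :
    (∃ α, IsExtremeRoot S α) ∧
    (∀ α, IsExtremeRoot S α →
      ∃ C' : ConvexCone ℝ V, (∀ x ∈ C', -x ∈ C' → x = 0) ∧
        S \ {x | ∃ t : ℝ, x = t • α} = Ψ ∩ ↑C') ∧
    (2 ≤ Module.finrank ℝ (Submodule.span ℝ S) →
      ∀ σ ∈ S, ∃ α, IsExtremeRoot S α ∧ LinearIndependent ℝ ![α, σ]) := by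
  have hCsal : C.Salient := fun x hx hx0 hnx => hx0 (hC x hx hnx)
  have hSΨ : S ⊆ Ψ := hS ▸ Set.inter_subset_left
  have hS0 (x : V) (hx : x ∈ S) : x ≠ 0 := hΨ.ne_zero x (hSΨ hx)
  have hsal := hCsal.hull_of_subset (hS ▸ Set.inter_subset_right)
  obtain ⟨T, hTS, hext⟩ :=
    exists_hull_eq_forall_exists_isExtremeRoot_smul (hΨ.finite.subset hSΨ) hS0 hsal
  refine ⟨?_, fun α hα => ?_, fun hdim σ hσ => ?_⟩
  · obtain ⟨σ, hσ⟩ := hne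
    obtain ⟨β, hβ⟩ : T.Nonempty := Set.nonempty_iff_ne_empty.2 fun hT =>
      hS0 σ hσ (by simpa [hT] using (hTS ▸ subset_hull hσ : σ ∈ hull ℝ T))
    obtain ⟨t, -, ht⟩ := hext β hβ
    exact ⟨_, ht⟩
  · have hsub : hull ℝ (S \ {x | ∃ t : ℝ, x = t • α}) ≤ hull ℝ S :=
      Submodule.span_mono Set.sdiff_subset
    exact ⟨hull ℝ (S \ {x | ∃ t : ℝ, x = t • α}),
      fun x hx hnx => hsal.eq_zero (hsub hx) (hsub hnx),
      hα.diff_line_eq_inter_hull hΨ.ne_zero hCsal hS⟩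
  · rw [← PointedCone.span_hull, ← hTS, PointedCone.span_hull] at hdim
    obtain ⟨β, hβT, hβσ⟩ := exists_mem_notMem_span_singleton_of_two_le_finrank hdim σ
    obtain ⟨t, ht, hα⟩ := hext β hβT
    exact ⟨t • β, hα, .pair_of_notMem_span_singleton (hS0 σ hσ)
      ((Submodule.smul_mem_iff _ ht.ne').not.2 hβσ)⟩

/-- Properties of nonempty saturated special closed subsets `S = Ψ ∩ C` of a
root system `Ψ`, where `C` is a convex cone containing no opposite nonzero
vectors: (1) `S` contains an extreme root; (2) removing the line `ℝα` of an
extreme root `α` from `S` again yields a saturated special closed subset; and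
(3) if the span of `S` has dimension `≥ 2`, then for every `σ ∈ S` there is an
extreme root of `S` linearly independent from `σ`. -/
theorem saturated_special_closed_extreme_roots
    {V : Type*} [NormedAddCommGroup V] [InnerProductSpace ℝ V] [FiniteDimensional ℝ V]
    {Ψ : Set V} (hΨ : IsRootSystem Ψ)
    (C : ConvexCone ℝ V) (hC : ∀ x ∈ C, -x ∈ C → x = 0)
    (S : Set V) (hS : S = Ψ ∩ ↑C) (hne : S.Nonempty) :
    (∃ α, IsExtremeRoot S α) ∧
    (∀ α, IsExtremeRoot S α →
      ∃ C' : ConvexCone ℝ V, (∀ x ∈ C', -x ∈ C' → x = 0) ∧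
        S \ {x | ∃ t : ℝ, x = t • α} = Ψ ∩ ↑C') ∧
    (2 ≤ Module.finrank ℝ (Submodule.span ℝ S) →
      ∀ σ ∈ S, ∃ α, IsExtremeRoot S α ∧ LinearIndependent ℝ ![α, σ]) :=
  saturated_special_closed_extreme_roots_general hΨ C hC S hS hne
end
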